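/- Let p, q ∈ ℕ* and let φ : {γ ∈ ℝ̃ : γ ≥ 0} → ℝ̃ be the map sending γ to γ^{p/q}, i.e. φ(γ) is the unique nonnegative element ρ ∈ ℝ̃ with ρ^q = γ^p (which exists and is unique since ℝ̃ is real closed). If φ is weakly continuous, then q divides p (i.e. p/q ∈ ℕ). -/

import Mathlib

/-! If `q ∤ p`, follow the path `c ↦ c + t` (`c ≥ 0`), which is coefficientwise continuous and
stays in `ℝ̃_{0,1} ∩ {γ ≥ 0}`. At `c = 0`, `φ(t) = t^{p/q}` has a nonzero coefficient at `p/q`.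
For `c > 0`, `φ(c + t)` is a `q`-th root of `(c + t)^p`, a series of order `0` with integral
exponents, and such a root has only integral exponents: at the least non-integral exponent `r` of
a root `y`, the coefficient of `y^q` is `q y₀^{q-1} y_r ≠ 0`. So the coefficient at `p/q` jumps
from `0` to a nonzero value, contradicting weak continuity. -/

noncomputable section
open Classical

namespace Puiseux

/-- A Hahn series (exponents in `ℚ`, real coefficients) is a *Puiseux series* if its
support is contained in `(1/q)ℤ` for some integer `q ≥ 1`. -/
def IsPuiseux (x : HahnSeries ℚ ℝ) : Prop :=
  ∃ q : ℕ, 0 < q ∧ ∀ r ∈ x.support, ∃ i : ℤ, r = (i : ℚ) / (q : ℚ)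

private lemma div_trick (i : ℤ) {a b : ℕ} (ha : 0 < a) (hb : 0 < b) :
    ((i : ℚ) / (a : ℚ)) = (((i * b : ℤ) : ℚ) / ((a * b : ℕ) : ℚ)) := by
  push_cast
  rw [mul_div_mul_right _ _ (by exact_mod_cast hb.ne' : (b : ℚ) ≠ 0)]

/-- The field `ℝ̃` of real Puiseux series, as a subring of the Hahn series field. -/
def Rring : Subring (HahnSeries ℚ ℝ) where
  carrier := {x | IsPuiseux x}
  zero_mem' := ⟨1, one_pos, by simp [HahnSeries.support_zero]⟩
  one_mem' := by
    refine ⟨1, one_pos, fun r hr => ⟨0, ?_⟩⟩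
    have h1 : (1 : HahnSeries ℚ ℝ) = HahnSeries.single (0 : ℚ) (1 : ℝ) := rfl
    have := HahnSeries.support_single_subset (h1 ▸ hr)
    simp only [Set.mem_singleton_iff] at this
    simp [this]
  add_mem' := by
    rintro x y ⟨qx, hqx, hx⟩ ⟨qy, hqy, hy⟩
    refine ⟨qx * qy, Nat.mul_pos hqx hqy, fun r hr => ?_⟩
    have hr' : x.coeff r ≠ 0 ∨ y.coeff r ≠ 0 := by
      by_contra h
      push_neg at h
      rw [HahnSeries.mem_support, HahnSeries.coeff_add, h.1, h.2, add_zero] at hr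
      exact hr rfl
    rcases hr' with h | h
    · obtain ⟨i, hi⟩ := hx r ((x.mem_support r).2 h)
      exact ⟨i * qy, by rw [hi, div_trick i hqx hqy]⟩
    · obtain ⟨i, hi⟩ := hy r ((y.mem_support r).2 h)
      refine ⟨i * qx, ?_⟩
      have h1 : (qx : ℚ) ≠ 0 := by exact_mod_cast hqx.ne'
      have h2 : (qy : ℚ) ≠ 0 := by exact_mod_cast hqy.ne'
      rw [hi]
      field_simp
      push_cast
      ring
  neg_mem' := by
    rintro x ⟨q, hq, hx⟩
    exact ⟨q, hq, fun r hr => hx r (by rwa [HahnSeries.support_neg] at hr)⟩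
  mul_mem' := by
    rintro x y ⟨qx, hqx, hx⟩ ⟨qy, hqy, hy⟩
    refine ⟨qx * qy, Nat.mul_pos hqx hqy, fun r hr => ?_⟩
    obtain ⟨a, ha, b, hb, rfl⟩ := HahnSeries.support_mul_subset hr
    obtain ⟨i, hi⟩ := hx a ha
    obtain ⟨j, hj⟩ := hy b hb
    refine ⟨i * qy + j * qx, ?_⟩
    rw [hi, hj]
    have h1 : (qx : ℚ) ≠ 0 := by exact_mod_cast hqx.ne'
    have h2 : (qy : ℚ) ≠ 0 := by exact_mod_cast hqy.ne'
    field_simp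
    push_cast
    ring

/-- The type `ℝ̃` of real Puiseux series. -/
abbrev R : Type := Rring

/-- A Puiseux series is *positive* if it is nonzero and its leading coefficient
(the coefficient of the smallest exponent in its support) is positive. -/
def Pos (x : HahnSeries ℚ ℝ) : Prop :=
  ∃ r : ℚ, 0 < x.coeff r ∧ ∀ s : ℚ, s < r → x.coeff s = 0

/-- The order relation `<` on `ℝ̃`. -/
def plt (x y : R) : Prop := Pos ((y : HahnSeries ℚ ℝ) - (x : HahnSeries ℚ ℝ))

/-- The order relation `≤` on `ℝ̃`. -/
def ple (x y : R) : Prop := x = y ∨ plt x y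

/-- The `ℝ̃`-topology (order/interval topology) on `ℝ̃`: generated by open rays. -/
def ordT : TopologicalSpace R :=
  TopologicalSpace.generateFrom
    ({s | ∃ a : R, s = {x | plt a x}} ∪ {s | ∃ a : R, s = {x | plt x a}})

/-- The `ℝ̃`-topology on `ℝ̃ⁿ` : product of the order topologies. -/
def ordTn (ι : Type) : TopologicalSpace (ι → R) :=
  @Pi.topologicalSpace ι (fun _ => R) (fun _ => ordT)

/-- The product (coefficientwise) topology on `ℝ̃`, induced from `Π_{r ∈ ℚ} ℝ`. -/
def coefT : TopologicalSpace R :=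
  TopologicalSpace.induced (fun (x : R) (r : ℚ) => (x : HahnSeries ℚ ℝ).coeff r)
    Pi.topologicalSpace

/-- The product topology on `ℝ̃ⁿ`. -/
def coefTn (ι : Type) : TopologicalSpace (ι → R) :=
  @Pi.topologicalSpace ι (fun _ => R) (fun _ => coefT)

/-- `ℝ̃_{p,q}`: Puiseux series of the form `Σ_{i ≥ p} a_i t^{i/q}`. -/
def Rpq (p : ℤ) (q : ℕ) : Set R :=
  {x | ∀ r ∈ (x : HahnSeries ℚ ℝ).support, ∃ i : ℤ, p ≤ i ∧ r = (i : ℚ) / (q : ℚ)}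

/-- `ℝ̃`-semialgebraic subsets of `ℝ̃^ι`: the Boolean algebra generated by the
sets `{x | P(x) > 0}`, for `P` a polynomial with coefficients in `ℝ̃`. -/
inductive IsSA (ι : Type) : Set (ι → R) → Prop
  | basic (P : MvPolynomial ι R) : IsSA ι {x | plt 0 (MvPolynomial.eval x P)}
  | compl {s : Set (ι → R)} : IsSA ι s → IsSA ι sᶜ
  | union {s t : Set (ι → R)} : IsSA ι s → IsSA ι t → IsSA ι (s ∪ t)

/-- An `ℝ̃`-semialgebraic map `ℝ̃ⁿ → ℝ̃ᵐ` : its graph is `ℝ̃`-semialgebraic. -/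
def IsSAMap {n m : ℕ} (φ : (Fin n → R) → (Fin m → R)) : Prop :=
  IsSA (Fin n ⊕ Fin m) {z | (fun j => z (Sum.inr j)) = φ (fun i => z (Sum.inl i))}

/-- An `ℝ̃`-semialgebraic function `ℝ̃ⁿ → ℝ̃` : its graph is `ℝ̃`-semialgebraic. -/
def IsSAFun {n : ℕ} (φ : (Fin n → R) → R) : Prop :=
  IsSA (Option (Fin n)) {z | z none = φ (fun i => z (some i))}

/-- Weak continuity of a map `ℝ̃ⁿ → ℝ̃ᵐ`. -/
def WeaklyContinuous {n m : ℕ} (φ : (Fin n → R) → (Fin m → R)) : Prop :=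
  ∀ (p : ℤ) (q : ℕ), 0 < q →
    @ContinuousOn _ _ (coefTn (Fin n)) (coefTn (Fin m)) φ {x | ∀ i, x i ∈ Rpq p q}

/-- Weak continuity of a function `ℝ̃ⁿ → ℝ̃`. -/
def WeaklyContinuousFun {n : ℕ} (φ : (Fin n → R) → R) : Prop :=
  ∀ (p : ℤ) (q : ℕ), 0 < q →
    @ContinuousOn _ _ (coefTn (Fin n)) coefT φ {x | ∀ i, x i ∈ Rpq p q}

/-- The constant series `ã ∈ ℝ̃` associated with a real number `a`. -/
def cnst (a : ℝ) : R :=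
  ⟨HahnSeries.C a, 1, one_pos, fun r hr => ⟨0, by
    have h0 : r ∈ ({0} : Set ℚ) :=
      HahnSeries.support_single_subset (by simpa [HahnSeries.C_apply] using hr)
    simp only [Set.mem_singleton_iff] at h0
    simp [h0]⟩⟩

/-- Scalar multiplication of a Puiseux series by a real number. -/
def smulR (c : ℝ) (x : R) : R := cnst c * x

/-- Finite continuity of a map `ℝ̃ⁿ → ℝ̃ᵐ`: continuity (towards the product topologies)
in restriction to every finite-dimensional `ℝ`-linear subspace of `ℝ̃ⁿ`. -/
def FinitelyContinuous {n m : ℕ} (φ : (Fin n → R) → (Fin m → R)) : Prop :=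
  ∀ (k : ℕ) (v : Fin k → (Fin n → R)),
    @ContinuousOn _ _ (coefTn (Fin n)) (coefTn (Fin m)) φ
      {x | ∃ c : Fin k → ℝ, x = fun i => ∑ j, smulR (c j) (v j i)}


/-- Weak continuity of a function `ℝ̃ → ℝ̃` on a subset `S ⊆ ℝ̃`: for every `(p,q)`,
the restriction to `S ∩ ℝ̃_{p,q}` is continuous for the product topologies. -/
def WeaklyContinuousOn1 (φ : R → R) (S : Set R) : Prop :=
  ∀ (p : ℤ) (q : ℕ), 0 < q → @ContinuousOn _ _ coefT coefT φ (S ∩ Rpq p q)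

/-- The absolute value on `ℝ̃`. -/
def pabs (x : R) : R := if ple 0 x then x else -x

/-- `f : ℝ̃ → ℝ̃` has derivative `d` at `x` (the difference quotient converges to `d`
as `h → 0` in the `ℝ̃`-topology, stated in a division-free way). -/
def HasPDerivAt (f : R → R) (x d : R) : Prop :=
  ∀ ε : R, plt 0 ε → ∃ δ : R, plt 0 δ ∧ ∀ h : R,
    ple (pabs h) δ → ple (pabs (f (x + h) - f x - d * h)) (ε * pabs h)

/-- `f : ℝ̃ → ℝ̃` is of class `ℝ̃-C^k` on `U`. For `k = 0` this is `ℝ̃`-continuity on `U`;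
for `k+1`, the derivative exists at every point of `U` and is of class `ℝ̃-C^k` on `U`. -/
def IsCkOn : ℕ → (R → R) → Set R → Prop
  | 0, f, U => @ContinuousOn _ _ ordT ordT f U
  | (k+1), f, U => ∃ f' : R → R, (∀ x ∈ U, HasPDerivAt f x (f' x)) ∧ IsCkOn k f' U

/-- An `ℝ̃`-semialgebraic function `ℝ̃ → ℝ̃`. -/
def IsSAFun1 (φ : R → R) : Prop :=
  IsSA Bool {z | z true = φ (z false)}

end Puiseux

theorem Nat.dvd_of_intCast_eq_div {p q : ℕ} {i : ℤ} (hq : q ≠ 0) (h : (i : ℚ) = p / q) :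
    q ∣ p := by
  rw [eq_div_iff (Nat.cast_ne_zero.mpr hq)] at h
  exact Int.natCast_dvd_natCast.mp ⟨i, by exact_mod_cast h.symm.trans (mul_comm _ _)⟩

theorem ContinuousWithinAt.eq_of_eqOn_Ioi {α β : Type*} [TopologicalSpace α] [LinearOrder α]
    [OrderTopology α] [DenselyOrdered α] [NoMaxOrder α] [TopologicalSpace β] [T1Space β]
    {f : α → β} {a : α} {b : β} (hf : ContinuousWithinAt f (Set.Ici a) a)
    (h : Set.EqOn f (fun _ => b) (Set.Ioi a)) : f a = b := by
  have hcl := (hf.mono Set.Ioi_subset_Ici_self).mem_closure_image (by simp [closure_Ioi])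
  have himg : f '' Set.Ioi a ⊆ {b} := by
    rintro _ ⟨c, hc, rfl⟩
    exact h hc
  simpa using closure_mono himg hcl

namespace AddSubmonoid

variable {Γ : Type*} [AddCommMonoid Γ] [LinearOrder Γ] [IsOrderedCancelAddMonoid Γ]

/-- For `r ∉ A`, the only pairs of elements of this monoid adding up to `r` are `(0, r)` and
`(r, 0)`. -/
def nonnegInBelow (A : AddSubmonoid Γ) (r : Γ) : AddSubmonoid Γ where
  carrier := {s | 0 ≤ s ∧ (s < r → s ∈ A)}
  zero_mem' := ⟨le_rfl, fun _ => A.zero_mem⟩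
  add_mem' {a b} ha hb := by
    refine ⟨add_nonneg ha.1 hb.1, fun hab => A.add_mem (ha.2 ?_) (hb.2 ?_)⟩
    · exact (le_add_of_nonneg_right hb.1).trans_lt hab
    · exact (le_add_of_nonneg_left ha.1).trans_lt hab

theorem nonnegInBelow_le_nonneg (A : AddSubmonoid Γ) (r : Γ) : A.nonnegInBelow r ≤ nonneg Γ :=
  fun _ hs => hs.1

end AddSubmonoid

namespace HahnSeries

variable {Γ R : Type*} [AddCommMonoid Γ] [LinearOrder Γ] [IsOrderedCancelAddMonoid Γ]

section Semiring

variable [Semiring R]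

theorem coeff_mul_eq_sum_of_subset {x y : HahnSeries Γ R} {c : Γ} {s : Finset (Γ × Γ)}
    (hs : ∀ p ∈ s, p.1 + p.2 = c)
    (h : ∀ a ∈ x.support, ∀ b ∈ y.support, a + b = c → (a, b) ∈ s) :
    (x * y).coeff c = ∑ p ∈ s, x.coeff p.1 * y.coeff p.2 := by
  rw [coeff_mul]
  refine Finset.sum_subset (fun p hp => ?_) (fun p hps hp => ?_)
  · rw [Finset.mem_antidiagonal] at hp
    exact h _ hp.1 _ hp.2.1 hp.2.2
  · rw [Finset.mem_antidiagonal] at hp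
    by_contra hne
    exact hp ⟨left_ne_zero_of_mul hne, right_ne_zero_of_mul hne, hs p hps⟩

def supportedIn (M : AddSubmonoid Γ) : Submonoid (HahnSeries Γ R) where
  carrier := {x | x.support ⊆ M}
  one_mem' s hs := by
    rw [Set.mem_singleton_iff.mp (support_single_subset hs)]
    exact M.zero_mem
  mul_mem' {x y} hx hy s hs := by
    obtain ⟨a, ha, b, hb, rfl⟩ := support_mul_subset hs
    exact M.add_mem (hx ha) (hy hb)

theorem supportedIn_mono {M N : AddSubmonoid Γ} (h : M ≤ N) :
    supportedIn (R := R) M ≤ supportedIn N :=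
  fun _ hx _ hs => h (hx hs)

theorem coeff_div_ne_zero_of_pow_eq_single [NoZeroDivisors R] {p q : ℕ} (hq : q ≠ 0)
    {y : HahnSeries ℚ R} {b : R} (hb : b ≠ 0) (h : y ^ q = single (p : ℚ) b) :
    y.coeff (p / q) ≠ 0 := by
  have hy : y ≠ 0 := by
    rintro rfl
    rw [zero_pow hq] at h
    exact single_ne_zero hb h.symm
  have hord : (q : ℚ) * y.order = p := by
    rw [← nsmul_eq_mul, ← order_pow, h, order_single hb]
  rw [← hord, mul_div_cancel_left₀ _ (Nat.cast_ne_zero.mpr hq)]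
  exact coeff_order_eq_zero.not.mpr hy

end Semiring

section CommSemiring

variable [CommSemiring R]

theorem coeff_zero_mul_of_mem_supportedIn_nonneg {x y : HahnSeries Γ R}
    (hx : x ∈ supportedIn (AddSubmonoid.nonneg Γ)) (hy : y ∈ supportedIn (AddSubmonoid.nonneg Γ)) :
    (x * y).coeff 0 = x.coeff 0 * y.coeff 0 := by
  rw [coeff_mul_eq_sum_of_subset (s := {(0, 0)}) (by simp), Finset.sum_singleton]
  intro a ha b hb hab
  rw [Finset.mem_singleton, Prod.mk.injEq]
  exact (add_eq_zero_iff_of_nonneg (hx ha) (hy hb)).mp hab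

theorem coeff_zero_pow_of_mem_supportedIn_nonneg {y : HahnSeries Γ R}
    (hy : y ∈ supportedIn (AddSubmonoid.nonneg Γ)) (n : ℕ) : (y ^ n).coeff 0 = y.coeff 0 ^ n := by
  induction n with
  | zero => simp
  | succ n ih =>
    rw [pow_succ, coeff_zero_mul_of_mem_supportedIn_nonneg (Submonoid.pow_mem _ hy n) hy, ih,
      pow_succ]

variable {A : AddSubmonoid Γ} {r : Γ}

theorem coeff_mul_of_mem_supportedIn_nonnegInBelow (hr : r ∉ A) {x y : HahnSeries Γ R}
    (hx : x ∈ supportedIn (A.nonnegInBelow r)) (hy : y ∈ supportedIn (A.nonnegInBelow r)) :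
    (x * y).coeff r = x.coeff 0 * y.coeff r + x.coeff r * y.coeff 0 := by
  have hr0 : (0, r) ≠ (r, 0) := by
    rintro ⟨⟩
    exact hr A.zero_mem
  rw [coeff_mul_eq_sum_of_subset (s := {(0, r), (r, 0)}) (by simp), Finset.sum_pair hr0]
  intro a ha b hb hab
  obtain ⟨ha0, haA⟩ := hx ha
  obtain ⟨hb0, hbA⟩ := hy hb
  simp only [Finset.mem_insert, Finset.mem_singleton, Prod.mk.injEq]
  rcases lt_or_ge a r with har | hra
  · rcases lt_or_ge b r with hbr | hrb
    · exact absurd (hab ▸ A.add_mem (haA har) (hbA hbr)) hr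
    · have hbr : b = r := le_antisymm (hab ▸ le_add_of_nonneg_left ha0) hrb
      exact Or.inl ⟨by simpa [hbr] using hab, hbr⟩
  · have har : a = r := le_antisymm (hab ▸ le_add_of_nonneg_right hb0) hra
    exact Or.inr ⟨har, by simpa [har] using hab⟩

theorem coeff_pow_succ_of_mem_supportedIn_nonnegInBelow (hr : r ∉ A) {y : HahnSeries Γ R}
    (hy : y ∈ supportedIn (A.nonnegInBelow r)) (n : ℕ) :
    (y ^ (n + 1)).coeff r = (n + 1) * y.coeff 0 ^ n * y.coeff r := by
  have hy₀ := supportedIn_mono (A.nonnegInBelow_le_nonneg r) hy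
  induction n with
  | zero => simp
  | succ n ih =>
    rw [pow_succ, coeff_mul_of_mem_supportedIn_nonnegInBelow hr (Submonoid.pow_mem _ hy _) hy, ih,
      coeff_zero_pow_of_mem_supportedIn_nonneg hy₀]
    push_cast
    ring

theorem support_subset_of_support_pow_subset [NoZeroDivisors R] [CharZero R]
    {y : HahnSeries Γ R} (hy : y ≠ 0) (hy₀ : y.order = 0) {q : ℕ} (hq : q ≠ 0)
    (hA : (y ^ q).support ⊆ A) : y.support ⊆ A := by
  intro r hr
  refine y.isWF_support.induction hr fun r hr ih => ?_
  by_contra hrA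
  have hyr : y ∈ supportedIn (A.nonnegInBelow r) := fun s hs =>
    ⟨hy₀ ▸ order_le_of_coeff_ne_zero hs, ih s hs⟩
  obtain ⟨n, rfl⟩ := Nat.exists_eq_succ_of_ne_zero hq
  have hcoeff := coeff_pow_succ_of_mem_supportedIn_nonnegInBelow hrA hyr n
  rw [show (y ^ (n + 1)).coeff r = 0 from not_not.mp fun h => hrA (hA h)] at hcoeff
  have hy0 : y.coeff 0 ≠ 0 := hy₀ ▸ coeff_order_eq_zero.not.mpr hy
  exact hr (by simpa [Nat.cast_add_one_ne_zero, hy0] using hcoeff.symm)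

end CommSemiring

end HahnSeries

namespace Puiseux

open HahnSeries Set

theorem support_C_add_single_one_subset (c : ℝ) :
    (C c + single (1 : ℚ) (1 : ℝ)).support ⊆ {0, 1} := by
  intro s hs
  by_contra hs01
  simp only [mem_insert_iff, mem_singleton_iff, not_or] at hs01
  exact hs (by simp [C_apply, coeff_single_of_ne hs01.1, coeff_single_of_ne hs01.2])

theorem coeff_div_eq_zero_of_pow_eq {p q : ℕ} (hpq : ¬q ∣ p) (hq : q ≠ 0) {c : ℝ} (hc : c ≠ 0)
    {y : HahnSeries ℚ ℝ} (h : y ^ q = (C c + single 1 1) ^ p) : y.coeff (p / q) = 0 := by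
  set w : HahnSeries ℚ ℝ := C c + single 1 1
  have hw0 : w.coeff 0 = c := by simp [w, C_apply]
  have hw : w ≠ 0 := ne_zero_of_coeff_ne_zero (hw0 ▸ hc)
  have hwℤ : w ∈ supportedIn (AddMonoidHom.mrange (Int.castAddHom ℚ)) := fun s hs => by
    rcases support_C_add_single_one_subset c hs with rfl | rfl
    exacts [⟨0, rfl⟩, ⟨1, rfl⟩]
  have hword : w.order = 0 := by
    rcases support_C_add_single_one_subset c (coeff_order_eq_zero.not.mpr hw) with h0 | h1
    · exact h0
    · exact absurd (h1 ▸ order_le_of_coeff_ne_zero (hw0 ▸ hc)) (by norm_num)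
  have hy : y ≠ 0 := by
    rintro rfl
    rw [zero_pow hq] at h
    exact pow_ne_zero p hw h.symm
  have hyord : y.order = 0 := by
    have := order_pow y q
    rw [h, order_pow, hword, smul_zero, eq_comm, smul_eq_zero] at this
    exact this.resolve_left hq
  by_contra hne
  obtain ⟨i, hi⟩ :=
    support_subset_of_support_pow_subset hy hyord hq (h ▸ Submonoid.pow_mem _ hwℤ p) hne
  exact hpq (Nat.dvd_of_intCast_eq_div hq hi)

def T : R := ⟨single 1 1, 1, one_pos, fun _ hr => ⟨1, by simpa using support_single_subset hr⟩⟩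

theorem coe_cnst_add_T (c : ℝ) : ((cnst c + T : R) : HahnSeries ℚ ℝ) = C c + single 1 1 := rfl

theorem ple_zero_of_pos {x : R} (hx : Pos (x : HahnSeries ℚ ℝ)) : ple 0 x :=
  Or.inr (by simpa [plt] using hx)

theorem ple_zero_cnst_add_T {c : ℝ} (hc : 0 ≤ c) : ple 0 (cnst c + T) := by
  refine ple_zero_of_pos ?_
  rw [coe_cnst_add_T]
  rcases hc.eq_or_lt with rfl | hc
  · refine ⟨1, by simp, fun s hs => ?_⟩
    simp [coeff_single_of_ne hs.ne]
  · refine ⟨0, by simpa [C_apply] using hc, fun s hs => ?_⟩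
    simp [C_apply, coeff_single_of_ne hs.ne, coeff_single_of_ne (hs.trans one_pos).ne]

theorem cnst_add_T_mem_Rpq (c : ℝ) : cnst c + T ∈ Rpq 0 1 := by
  intro s hs
  rw [coe_cnst_add_T] at hs
  rcases support_C_add_single_one_subset c hs with rfl | rfl
  exacts [⟨0, le_rfl, by simp⟩, ⟨1, zero_le_one, by simp⟩]

theorem continuous_cnst_add_T : @Continuous ℝ R _ coefT fun c => cnst c + T := by
  refine continuous_induced_rng.mpr (continuous_pi fun r => ?_)
  simp only [Function.comp_def, coe_cnst_add_T, coeff_add, C_apply, coeff_single]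
  split_ifs <;> fun_prop

theorem continuous_coeff (r : ℚ) :
    @Continuous R ℝ coefT _ fun x => (x : HahnSeries ℚ ℝ).coeff r :=
  letI := coefT
  (continuous_apply r).comp continuous_induced_dom

theorem continuousWithinAt_coeff_comp_cnst_add_T {φ : R → R}
    (hw : WeaklyContinuousOn1 φ {γ | ple 0 γ}) (r : ℚ) :
    ContinuousWithinAt (fun c : ℝ => ((φ (cnst c + T) : R) : HahnSeries ℚ ℝ).coeff r)
      (Ici 0) 0 := by
  let := coefT
  have hmaps : MapsTo (fun c : ℝ => cnst c + T) (Ici 0) ({γ | ple 0 γ} ∩ Rpq 0 1) :=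
    fun c hc => ⟨ple_zero_cnst_add_T hc, cnst_add_T_mem_Rpq c⟩
  exact (continuous_coeff r).continuousAt.comp_continuousWithinAt
    (((hw 0 1 one_pos).comp continuous_cnst_add_T.continuousOn hmaps) 0 self_mem_Ici)

theorem statement4_general (p q : ℕ) (hq : 0 < q) (φ : R → R)
    (hroot : ∀ γ : R, ple 0 γ → ple 0 (φ γ) ∧ (φ γ) ^ q = γ ^ p)
    (hw : WeaklyContinuousOn1 φ {γ : R | ple 0 γ}) :
    q ∣ p := by
  by_contra hpq
  have hpow (c : ℝ) (hc : 0 ≤ c) :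
      ((φ (cnst c + T) : R) : HahnSeries ℚ ℝ) ^ q = (C c + single 1 1) ^ p :=
    congrArg Subtype.val (hroot _ (ple_zero_cnst_add_T hc)).2
  have hφT : ((φ (cnst 0 + T) : R) : HahnSeries ℚ ℝ).coeff (p / q) ≠ 0 :=
    coeff_div_ne_zero_of_pow_eq_single hq.ne' one_ne_zero
      (by simpa [single_pow] using hpow 0 le_rfl)
  exact hφT <| (continuousWithinAt_coeff_comp_cnst_add_T hw _).eq_of_eqOn_Ioi fun c hc =>
    coeff_div_eq_zero_of_pow_eq hpq hq.ne' hc.ne' (hpow c hc.le)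

/-- Example `ex-simple`. Let `p, q ∈ ℕ*` and let `φ` send each
`γ ≥ 0` in `ℝ̃` to `γ^{p/q}`, i.e. `φ γ ≥ 0` and `(φ γ)^q = γ^p` for `γ ≥ 0`.
If `φ` is weakly continuous on `{γ ≥ 0}`, then `q` divides `p`. -/
theorem statement4 (p q : ℕ) (hp : 0 < p) (hq : 0 < q) (φ : R → R)
    (hroot : ∀ γ : R, ple 0 γ → ple 0 (φ γ) ∧ (φ γ) ^ q = γ ^ p)
    (hw : WeaklyContinuousOn1 φ {γ : R | ple 0 γ}) :
    q ∣ p :=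
  statement4_general p q hq φ hroot hw

end Puiseux
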